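/- Let N be a positive integer, E ⊆ ℤ_N, and Λ ⊆ ℤ_N. If the characters {e_λ : λ ∈ Λ} are pairwise orthogonal in ℓ²(E), then Σ_{λ ∈ Λ} |𝟙̂_E(x − λ)|² ≤ |E|² for all x ∈ ℤ_N. -/

import Mathlib

/-- The character `e_λ(x) = exp(2πiλx/N)` on `ℤ_N`. -/
noncomputable def e1 (N : ℕ) (lam x : ZMod N) : ℂ :=
  Complex.exp (2 * (Real.pi : ℂ) * Complex.I * (lam.val : ℂ) * (x.val : ℂ) / (N : ℂ))

/-- Fourier transform of the indicator of `E ⊆ ℤ_N`. -/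
noncomputable def indFT (N : ℕ) (E : Finset (ZMod N)) (x : ZMod N) : ℂ :=
  ∑ k ∈ E, Complex.exp (-(2 * (Real.pi : ℂ) * Complex.I) * (x.val : ℂ) * (k.val : ℂ) / (N : ℂ))

/-!
In `ℓ²(E)` the characters `e_λ`, `λ ∈ Λ`, are pairwise orthogonal of common norm `√|E|`, and
`𝟙̂_E(x − λ) = ⟪e_x, e_λ⟫`. Bessel's inequality for the normalised family then bounds the sum by
`|E| · ‖e_x‖² = |E|²`.
-/

open scoped InnerProductSpace ComplexConjugate

section Bessel

variable {𝕜 E ι : Type*} [RCLike 𝕜] [SeminormedAddCommGroup E] [InnerProductSpace 𝕜 E]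

theorem sum_norm_inner_sq_le_of_orthogonal_of_norm_eq {v : ι → E} {s : Finset ι} {r : ℝ}
    (hnorm : ∀ i ∈ s, ‖v i‖ = r) (horth : ∀ i ∈ s, ∀ j ∈ s, i ≠ j → ⟪v i, v j⟫_𝕜 = 0) (f : E) :
    ∑ i ∈ s, ‖⟪v i, f⟫_𝕜‖ ^ 2 ≤ r ^ 2 * ‖f‖ ^ 2 := by
  classical
  rcases eq_or_ne r 0 with rfl | hr
  · refine (Finset.sum_nonpos fun i hi => ?_).trans (by positivity)
    have := norm_inner_le_norm (𝕜 := 𝕜) (v i) f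
    rw [hnorm i hi, zero_mul] at this
    nlinarith [norm_nonneg ⟪v i, f⟫_𝕜]
  set w : s → E := fun i => ((r : 𝕜)⁻¹) • v i
  have hw : Orthonormal 𝕜 w := by
    rw [orthonormal_iff_ite]
    rintro ⟨i, hi⟩ ⟨j, hj⟩
    simp only [w, inner_smul_left, inner_smul_right, map_inv₀, RCLike.conj_ofReal, Subtype.mk.injEq]
    split_ifs with hij
    · subst hij
      rw [inner_self_eq_norm_sq_to_K, hnorm i hi]
      have hr' : (r : 𝕜) ≠ 0 := RCLike.ofReal_ne_zero.2 hr
      field_simp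
    · rw [horth i hi j hj hij, mul_zero, mul_zero]
  have hbessel := hw.sum_inner_products_le f (s := Finset.univ)
  have hcoeff : ∀ i : s, ‖⟪w i, f⟫_𝕜‖ ^ 2 = (r ^ 2)⁻¹ * ‖⟪v i, f⟫_𝕜‖ ^ 2 := fun i => by
    simp only [w, inner_smul_left, norm_mul, RCLike.norm_conj, norm_inv, RCLike.norm_ofReal]
    rw [mul_pow, inv_pow, sq_abs]
  rw [Finset.sum_congr rfl fun i _ => hcoeff i, ← Finset.mul_sum,
    Finset.sum_coe_sort s fun i => ‖⟪v i, f⟫_𝕜‖ ^ 2] at hbessel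
  rwa [inv_mul_le_iff₀ (by positivity)] at hbessel

end Bessel

section L2

variable {𝕜 α : Type*} [RCLike 𝕜]

noncomputable def restrictL2 (E : Finset α) (f : α → 𝕜) : EuclideanSpace 𝕜 E :=
  WithLp.toLp 2 fun k => f k

theorem inner_restrictL2 (E : Finset α) (f g : α → 𝕜) :
    ⟪restrictL2 E f, restrictL2 E g⟫_𝕜 = ∑ k ∈ E, conj (f k) * g k := by
  rw [PiLp.inner_apply, ← Finset.sum_coe_sort E]
  simp [restrictL2, mul_comm]

theorem norm_restrictL2_of_norm_eq_one {E : Finset α} {f : α → 𝕜} (hf : ∀ k ∈ E, ‖f k‖ = 1) :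
    ‖restrictL2 E f‖ = √(E.card : ℝ) := by
  rw [EuclideanSpace.norm_eq]
  calc √(∑ k : E, ‖f k‖ ^ 2) = √(∑ k ∈ E, 1 ^ 2) := by
        rw [Finset.sum_coe_sort E fun k => ‖f k‖ ^ 2,
          Finset.sum_congr rfl fun k hk => by rw [hf k hk]]
    _ = √(E.card : ℝ) := by simp

end L2

section Characters

open ZMod

variable {N : ℕ} [NeZero N]

theorem e1_eq_toCircle (l x : ZMod N) : e1 N l x = toCircle (l * x) := by
  rw [show l * x = ((l.val * x.val : ℕ) : ZMod N) by simp, toCircle_natCast, e1]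
  push_cast
  ring_nf

theorem indFT_eq_sum_toCircle (E : Finset (ZMod N)) (y : ZMod N) :
    indFT N E y = ∑ k ∈ E, (toCircle (-(y * k)) : ℂ) := by
  refine Finset.sum_congr rfl fun k _ => ?_
  rw [show -(y * k) = (Int.cast (-(y.val * k.val : ℤ)) : ZMod N) by simp, toCircle_intCast]
  push_cast
  ring_nf

theorem norm_e1 (l x : ZMod N) : ‖e1 N l x‖ = 1 := by
  rw [e1_eq_toCircle, Circle.norm_coe]

theorem indFT_sub_eq_inner (E : Finset (ZMod N)) (x l : ZMod N) :
    indFT N E (x - l) = ⟪restrictL2 E (e1 N x), restrictL2 E (e1 N l)⟫_ℂ := by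
  rw [inner_restrictL2, indFT_eq_sum_toCircle]
  refine Finset.sum_congr rfl fun k _ => ?_
  rw [e1_eq_toCircle, e1_eq_toCircle, ← Circle.coe_inv_eq_conj, ← Circle.coe_mul,
    ← AddChar.map_neg_eq_inv, ← AddChar.map_add_eq_mul]
  ring_nf

end Characters

/-- If the characters `{e_λ : λ ∈ Λ}` are pairwise orthogonal in `ℓ²(E)`, then
`Σ_{λ ∈ Λ} |𝟙̂_E(x − λ)|² ≤ |E|²` for all `x`. -/
theorem orthogonal_implies_packing (N : ℕ) [NeZero N] (E L : Finset (ZMod N))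
    (horth : ∀ l ∈ L, ∀ m ∈ L, l ≠ m →
      ∑ x ∈ E, e1 N l x * (starRingEnd ℂ) (e1 N m x) = 0) :
    ∀ x : ZMod N, ∑ l ∈ L, ‖indFT N E (x - l)‖ ^ 2 ≤ (E.card : ℝ) ^ 2 := by
  intro x
  have hnorm : ∀ l, ‖restrictL2 E (e1 N l)‖ = √(E.card : ℝ) := fun l =>
    norm_restrictL2_of_norm_eq_one fun k _ => norm_e1 l k
  have hchar_orth : ∀ l ∈ L, ∀ m ∈ L, l ≠ m →
      ⟪restrictL2 E (e1 N l), restrictL2 E (e1 N m)⟫_ℂ = 0 := fun l hl m hm hlm => by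
    rw [inner_restrictL2, ← horth m hm l hl hlm.symm]
    simp only [mul_comm]
  calc ∑ l ∈ L, ‖indFT N E (x - l)‖ ^ 2
      = ∑ l ∈ L, ‖⟪restrictL2 E (e1 N l), restrictL2 E (e1 N x)⟫_ℂ‖ ^ 2 := by
        simp only [indFT_sub_eq_inner, norm_inner_symm]
    _ ≤ √(E.card : ℝ) ^ 2 * ‖restrictL2 E (e1 N x)‖ ^ 2 :=
        sum_norm_inner_sq_le_of_orthogonal_of_norm_eq (fun l _ => hnorm l) hchar_orth _
    _ = (E.card : ℝ) ^ 2 := by rw [hnorm, Real.sq_sqrt (Nat.cast_nonneg _)]; ring
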